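/- (Reverse l'Hôpital's rule) Let 𝓡 be an o-minimal structure on ℝ and let φ, ψ : (0, ε) → ℝ be definable and differentiable functions with lim_{t ↓ 0} φ(t) = lim_{t ↓ 0} ψ(t) = 0, and suppose ψ'(t) > 0 for all t sufficiently close to 0. Then for any ℓ ∈ ℝ, if φ(t)/ψ(t) → ℓ as t ↓ 0, then φ'(t)/ψ'(t) → ℓ as t ↓ 0. -/

import Mathlib

/-- A structure on ℝ in the sense of tame geometry: axioms (S1)-(S4).
`sets n` is the collection of definable subsets of ℝ^n. -/
structure RealStructure where
  sets : ∀ n : ℕ, Set (Set (Fin n → ℝ))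
  /-- (S1) each `sets n` is a boolean algebra of subsets of ℝ^n -/
  empty_mem : ∀ n, (∅ : Set (Fin n → ℝ)) ∈ sets n
  univ_mem : ∀ n, (Set.univ : Set (Fin n → ℝ)) ∈ sets n
  union_mem : ∀ n, ∀ A B : Set (Fin n → ℝ), A ∈ sets n → B ∈ sets n → A ∪ B ∈ sets n
  compl_mem : ∀ n, ∀ A : Set (Fin n → ℝ), A ∈ sets n → Aᶜ ∈ sets n
  /-- (S2) if A ∈ 𝓡_n then ℝ × A ∈ 𝓡_{n+1} -/
  prod_left_mem : ∀ n, ∀ A : Set (Fin n → ℝ), A ∈ sets n →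
    {x : Fin (n + 1) → ℝ | (fun i : Fin n => x i.succ) ∈ A} ∈ sets (n + 1)
  /-- (S2) if A ∈ 𝓡_n then A × ℝ ∈ 𝓡_{n+1} -/
  prod_right_mem : ∀ n, ∀ A : Set (Fin n → ℝ), A ∈ sets n →
    {x : Fin (n + 1) → ℝ | (fun i : Fin n => x i.castSucc) ∈ A} ∈ sets (n + 1)
  /-- (S3) the diagonal {x : x₁ = x_n} is definable -/
  diag_mem : ∀ n : ℕ, {x : Fin (n + 1) → ℝ | x 0 = x (Fin.last n)} ∈ sets (n + 1)
  /-- (S4) projection onto the first n coordinates preserves definability -/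
  proj_mem : ∀ n, ∀ A : Set (Fin (n + 1) → ℝ), A ∈ sets (n + 1) →
    (fun (x : Fin (n + 1) → ℝ) (i : Fin n) => x i.castSucc) '' A ∈ sets n

/-- An open interval (possibly unbounded) or a point in ℝ. -/
def IsOpenIntervalOrPoint (I : Set ℝ) : Prop :=
  (∃ a b : ℝ, I = Set.Ioo a b) ∨ (∃ a : ℝ, I = Set.Ioi a) ∨ (∃ a : ℝ, I = Set.Iio a) ∨
    I = Set.univ ∨ (∃ a : ℝ, I = {a})

/-- An o-minimal structure on ℝ: a structure satisfying moreover (S5), (S6), (O1), (O2). -/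
structure OminimalStructure extends RealStructure where
  /-- (S5) singletons are definable -/
  singleton_mem : ∀ a : ℝ, {x : Fin 1 → ℝ | x 0 = a} ∈ sets 1
  /-- (S6) the graph of addition is definable -/
  add_graph_mem : {x : Fin 3 → ℝ | x 2 = x 0 + x 1} ∈ sets 3
  /-- (S6) the graph of multiplication is definable -/
  mul_graph_mem : {x : Fin 3 → ℝ | x 2 = x 0 * x 1} ∈ sets 3
  /-- (O1) the order is definable -/
  lt_mem : {x : Fin 2 → ℝ | x 0 < x 1} ∈ sets 2
  /-- (O2) the definable subsets of ℝ are exactly the finite unions of open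
  intervals and points -/
  omin : ∀ A : Set (Fin 1 → ℝ), A ∈ sets 1 ↔
    ∃ T : Finset (Set ℝ), (∀ I ∈ T, IsOpenIntervalOrPoint I) ∧
      A = (fun x : Fin 1 → ℝ => x 0) ⁻¹' ⋃ I ∈ T, I

/-!
Fix `c > ℓ` and put `g = φ - c ψ`. It is definable, tends to `0` at `0⁺`, and is eventually
negative since `φ / ψ → ℓ` and `ψ > 0` near `0⁺` (as `ψ` increases from `0`). The set of points
at which `g` has a right-local minimum is definable, so by o-minimality it either contains or
misses a whole interval `(0, u)`. In the first case `g' ≥ 0` on `(0, u)`, so `g` increases there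
from its limit `0` and cannot be negative. Hence we are in the second case: `g` takes smaller
values arbitrarily close to the right of every point, so `g' ≤ 0`, i.e. `φ' ≤ c ψ'`.
Symmetrically `c ψ' ≤ φ'` for `c < ℓ`, and these two bounds give `φ' / ψ' → ℓ`.
-/
open Filter Topology Set

namespace RealStructure

variable (R : RealStructure)

def Definable {n : ℕ} (P : (Fin n → ℝ) → Prop) : Prop :=
  {x | P x} ∈ R.sets n

variable {R} {n k : ℕ}

theorem Definable.of_iff {P Q : (Fin n → ℝ) → Prop} (hP : R.Definable P) (h : ∀ x, P x ↔ Q x) :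
    R.Definable Q := by
  simpa only [Definable, h] using hP

theorem definable_true (n : ℕ) : R.Definable fun _ : Fin n → ℝ => True :=
  R.univ_mem n

theorem Definable.not {P : (Fin n → ℝ) → Prop} (hP : R.Definable P) :
    R.Definable fun x => ¬ P x :=
  R.compl_mem n _ hP

theorem Definable.or {P Q : (Fin n → ℝ) → Prop} (hP : R.Definable P) (hQ : R.Definable Q) :
    R.Definable fun x => P x ∨ Q x :=
  R.union_mem n _ _ hP hQ

theorem Definable.and {P Q : (Fin n → ℝ) → Prop} (hP : R.Definable P) (hQ : R.Definable Q) :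
    R.Definable fun x => P x ∧ Q x :=
  (hP.not.or hQ.not).not.of_iff fun _ => not_or.trans (by simp only [not_not])

theorem Definable.imp {P Q : (Fin n → ℝ) → Prop} (hP : R.Definable P) (hQ : R.Definable Q) :
    R.Definable fun x => P x → Q x :=
  (hP.not.or hQ).of_iff fun _ => imp_iff_not_or.symm

theorem Definable.forall_fin {P : Fin k → (Fin n → ℝ) → Prop} (hP : ∀ j, R.Definable (P j)) :
    R.Definable fun x => ∀ j, P j x := by
  induction k with
  | zero => exact (definable_true n).of_iff fun _ => by simp
  | succ k ih =>
    exact ((hP 0).and (ih fun j => hP j.succ)).of_iff fun x =>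
      (Fin.forall_fin_succ (P := fun j => P j x)).symm

theorem Definable.exists_snoc {P : (Fin (n + 1) → ℝ) → Prop} (hP : R.Definable P) :
    R.Definable fun x => ∃ y, P (Fin.snoc x y) := by
  refine Definable.of_iff (R.proj_mem n _ hP) fun x =>
    ⟨?_, fun ⟨y, hy⟩ => ⟨_, hy, Fin.init_snoc _ _⟩⟩
  rintro ⟨z, hz, rfl⟩
  exact ⟨z (Fin.last n), show P (Fin.snoc (Fin.init z) _) by rwa [Fin.snoc_init_self]⟩

-- Formulas are built by nesting this, so their variables are the coordinates in order of
-- quantification; the indices in the `comp ![_, _]` atoms below are found by unification.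
theorem Definable.exists {P : (Fin n → ℝ) → ℝ → Prop}
    (hP : R.Definable fun z : Fin (n + 1) → ℝ => P (Fin.init z) (z (Fin.last n))) :
    R.Definable fun x => ∃ y, P x y :=
  hP.exists_snoc.of_iff fun x => by simp only [Fin.init_snoc, Fin.snoc_last]

theorem Definable.forall {P : (Fin n → ℝ) → ℝ → Prop}
    (hP : R.Definable fun z : Fin (n + 1) → ℝ => P (Fin.init z) (z (Fin.last n))) :
    R.Definable fun x => ∀ y, P x y :=
  hP.not.exists.not.of_iff fun _ => not_exists_not

theorem Definable.exists_append {P : (Fin (n + k) → ℝ) → Prop} (hP : R.Definable P) :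
    R.Definable fun x => ∃ y : Fin k → ℝ, P (Fin.append x y) := by
  induction k with
  | zero => exact hP.of_iff fun x => ⟨fun h => ⟨Fin.elim0, by simpa⟩, fun ⟨y, h⟩ => by
      rwa [Subsingleton.elim y Fin.elim0, Fin.append_elim0] at h⟩
  | succ k ih =>
    refine (ih hP.exists_snoc).of_iff fun x => ⟨?_, ?_⟩
    · rintro ⟨y, a, h⟩
      exact ⟨Fin.snoc y a, by rwa [Fin.append_snoc]⟩
    · rintro ⟨y, h⟩
      exact ⟨Fin.init y, y (Fin.last k), by rwa [← Fin.append_snoc, Fin.snoc_init_self]⟩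

theorem Definable.comp_tail {P : (Fin n → ℝ) → Prop} (hP : R.Definable P) :
    R.Definable fun x : Fin (n + 1) → ℝ => P (Fin.tail x) :=
  R.prod_left_mem n _ hP

theorem Definable.comp_init {P : (Fin n → ℝ) → Prop} (hP : R.Definable P) :
    R.Definable fun x : Fin (n + 1) → ℝ => P (Fin.init x) :=
  R.prod_right_mem n _ hP

theorem Definable.comp_congr {m : ℕ} {P : (Fin k → ℝ) → Prop} {f g : Fin k → Fin m}
    (hP : R.Definable fun x => P fun i => x (f i)) (hfg : ∀ i, (f i : ℕ) = g i) :
    R.Definable fun x => P fun i => x (g i) := by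
  obtain rfl : f = g := funext fun i => Fin.ext (hfg i)
  exact hP

theorem Definable.comp_offset {P : (Fin k → ℝ) → Prop} (hP : R.Definable P) {m a : ℕ}
    (h : a + k ≤ m) :
    R.Definable fun x : Fin m → ℝ => P fun i => x ⟨a + i, by omega⟩ := by
  induction m generalizing a with
  | zero =>
    obtain rfl : k = 0 := by omega
    exact hP.of_iff fun x => iff_of_eq (congrArg P (Subsingleton.elim _ _))
  | succ m ih =>
    rcases Nat.lt_or_ge (a + k) (m + 1) with hlt | hge
    · exact (ih (by omega)).comp_init
    · rcases a with _ | a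
      · obtain rfl : k = m + 1 := by omega
        exact hP.of_iff fun x => by simp only [Nat.zero_add, Fin.eta]
      · exact (ih (a := a) (by omega)).comp_tail.comp_congr fun i => by simp; omega

theorem definable_coord_eq (i j : Fin n) : R.Definable fun x => x i = x j := by
  wlog hij : i ≤ j generalizing i j
  · exact (this j i (le_of_not_ge hij)).of_iff fun x => eq_comm
  obtain ⟨d, hd⟩ := Nat.exists_eq_add_of_le (Fin.le_iff_val_le_val.1 hij)
  refine (Definable.comp_offset (R.diag_mem d) (a := i) (by omega)).of_iff fun x => ?_
  simp only [Fin.val_zero, Fin.val_last, add_zero, ← hd, Fin.eta]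

theorem Definable.comp {P : (Fin k → ℝ) → Prop} (hP : R.Definable P) (f : Fin k → Fin n) :
    R.Definable fun x => P fun j => x (f j) := by
  -- `P (x ∘ f)` iff some `y` with `y = x ∘ f` satisfies `P`: project out `y` from `ℝ^(n + k)`.
  have hQ : R.Definable fun z : Fin (n + k) → ℝ =>
      (∀ j, z (Fin.natAdd n j) = z (Fin.castAdd k (f j))) ∧ P fun j => z (Fin.natAdd n j) :=
    (Definable.forall_fin fun j => definable_coord_eq _ _).and (hP.comp_offset le_rfl)
  refine hQ.exists_append.of_iff fun x => ⟨?_, fun h => ⟨fun j => x (f j), by simpa using h⟩⟩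
  rintro ⟨y, hy, hPy⟩
  simp only [Fin.append_left, Fin.append_right] at hy hPy
  rwa [← funext hy]

end RealStructure

section

variable {g : ℝ → ℝ} {g' a b t L : ℝ}

theorem HasDerivWithinAt.nonneg_of_eventually_le (hg : HasDerivWithinAt g g' (Ioi t) t)
    (h : ∀ᶠ s in 𝓝[>] t, g t ≤ g s) : 0 ≤ g' := by
  refine ge_of_tendsto ((hasDerivWithinAt_iff_tendsto_slope' self_notMem_Ioi).1 hg) ?_
  filter_upwards [h, self_mem_nhdsWithin] with s hs hts
  rw [slope_def_field]
  exact div_nonneg (sub_nonneg.2 hs) (sub_nonneg.2 (le_of_lt hts))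

theorem HasDerivWithinAt.nonpos_of_frequently_lt (hg : HasDerivWithinAt g g' (Ioi t) t)
    (h : ∃ᶠ s in 𝓝[>] t, g s < g t) : g' ≤ 0 := by
  refine le_of_tendsto_of_frequently
    ((hasDerivWithinAt_iff_tendsto_slope' self_notMem_Ioi).1 hg) ?_
  refine (h.and_eventually self_mem_nhdsWithin).mono fun s ⟨hs, hts⟩ => ?_
  rw [slope_def_field]
  exact div_nonpos_of_nonpos_of_nonneg (sub_nonpos.2 hs.le) (sub_nonneg.2 (le_of_lt hts))

theorem MonotoneOn.le_of_tendsto_nhdsGT (hg : MonotoneOn g (Ioo a b))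
    (hL : Tendsto g (𝓝[>] a) (𝓝 L)) (ht : t ∈ Ioo a b) : L ≤ g t := by
  refine le_of_tendsto hL ?_
  filter_upwards [Ioo_mem_nhdsGT ht.1] with s hs
  exact hg ⟨hs.1, hs.2.trans ht.2⟩ ht hs.2.le

theorem StrictMonoOn.lt_of_tendsto_nhdsGT (hg : StrictMonoOn g (Ioo a b))
    (hL : Tendsto g (𝓝[>] a) (𝓝 L)) (ht : t ∈ Ioo a b) : L < g t := by
  obtain ⟨s, has, hst⟩ := exists_between ht.1
  exact (hg.monotoneOn.le_of_tendsto_nhdsGT hL ⟨has, hst.trans ht.2⟩).trans_lt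
    (hg ⟨has, hst.trans ht.2⟩ ht hst)

end

section

variable {g g' : ℝ → ℝ} {a : ℝ}

theorem exists_monotoneOn_Ioo_of_eventually_nonneg
    (h : ∀ᶠ t in 𝓝[>] a, HasDerivAt g (g' t) t ∧ 0 ≤ g' t) :
    ∃ u, a < u ∧ MonotoneOn g (Ioo a u) := by
  obtain ⟨u, hau, hu⟩ := mem_nhdsGT_iff_exists_Ioo_subset.1 h
  refine ⟨u, hau, monotoneOn_of_hasDerivWithinAt_nonneg (f' := g') (convex_Ioo a u)
    (fun t ht => (hu ht).1.continuousAt.continuousWithinAt) (fun t ht => ?_) fun t ht => ?_⟩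
  all_goals rw [interior_Ioo] at ht
  exacts [(hu ht).1.hasDerivWithinAt, (hu ht).2]

theorem exists_strictMonoOn_Ioo_of_eventually_pos
    (h : ∀ᶠ t in 𝓝[>] a, HasDerivAt g (g' t) t ∧ 0 < g' t) :
    ∃ u, a < u ∧ StrictMonoOn g (Ioo a u) := by
  obtain ⟨u, hau, hu⟩ := mem_nhdsGT_iff_exists_Ioo_subset.1 h
  refine ⟨u, hau, strictMonoOn_of_hasDerivWithinAt_pos (f' := g') (convex_Ioo a u)
    (fun t ht => (hu ht).1.continuousAt.continuousWithinAt) (fun t ht => ?_) fun t ht => ?_⟩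
  all_goals rw [interior_Ioo] at ht
  exacts [(hu ht).1.hasDerivWithinAt, (hu ht).2]

end

theorem Set.OrdConnected.eventually_mem_or_eventually_not_mem {α : Type*} [LinearOrder α]
    [TopologicalSpace α] [OrderTopology α] {I : Set α} (hI : I.OrdConnected) (a : α) :
    (∀ᶠ t in 𝓝[>] a, t ∈ I) ∨ ∀ᶠ t in 𝓝[>] a, t ∉ I := by
  by_contra! h
  obtain ⟨hin, hout⟩ : (∃ᶠ t in 𝓝[>] a, t ∈ I) ∧ ∃ᶠ t in 𝓝[>] a, t ∉ I := by
    simpa only [Filter.not_eventually, not_not, and_comm] using h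
  obtain ⟨t₁, ht₁, hat₁⟩ := (hin.and_eventually self_mem_nhdsWithin).exists
  obtain ⟨s, hs, has, hst₁⟩ := (hout.and_eventually (Ioo_mem_nhdsGT hat₁)).exists
  obtain ⟨t₂, ht₂, -, ht₂s⟩ := (hin.and_eventually (Ioo_mem_nhdsGT has)).exists
  exact hs (hI.out ht₂ ht₁ ⟨ht₂s.le, hst₁.le⟩)

theorem IsOpenIntervalOrPoint.ordConnected {I : Set ℝ} (hI : IsOpenIntervalOrPoint I) :
    I.OrdConnected := by
  rcases hI with ⟨a, b, rfl⟩ | ⟨a, rfl⟩ | ⟨a, rfl⟩ | rfl | ⟨a, rfl⟩ <;> infer_instance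

namespace OminimalStructure

variable {S : OminimalStructure} {n : ℕ}

theorem eventually_or_eventually_not {P : ℝ → Prop}
    (hP : S.Definable fun x : Fin 1 → ℝ => P (x 0)) (a : ℝ) :
    (∀ᶠ t in 𝓝[>] a, P t) ∨ ∀ᶠ t in 𝓝[>] a, ¬ P t := by
  obtain ⟨T, hT, hPT⟩ := (S.omin _).1 hP
  have hP_iff (t : ℝ) : P t ↔ t ∈ ⋃ I ∈ T, I := Set.ext_iff.1 hPT fun _ => t
  simp only [hP_iff]
  by_cases h : ∃ I ∈ T, ∀ᶠ t in 𝓝[>] a, t ∈ I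
  · obtain ⟨I, hI, hev⟩ := h
    exact .inl (hev.mono fun t ht => mem_biUnion hI ht)
  · simp only [not_exists, not_and] at h
    have hout (I) (hI : I ∈ T) : ∀ᶠ t in 𝓝[>] a, t ∉ I :=
      ((hT I hI).ordConnected.eventually_mem_or_eventually_not_mem a).resolve_left (h I hI)
    refine .inr (((eventually_all_finset T).2 hout).mono fun t ht => ?_)
    simpa only [mem_iUnion, not_exists] using ht

theorem definable_lt (i j : Fin n) : S.Definable fun x => x i < x j :=
  RealStructure.Definable.comp S.lt_mem ![i, j]

theorem definable_eq_const (i : Fin n) (c : ℝ) : S.Definable fun x => x i = c :=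
  RealStructure.Definable.comp (S.singleton_mem c) ![i]

theorem definable_eq_add (i j k : Fin n) : S.Definable fun x => x i = x j + x k :=
  RealStructure.Definable.comp S.add_graph_mem ![j, k, i]

theorem definable_eq_mul (i j k : Fin n) : S.Definable fun x => x i = x j * x k :=
  RealStructure.Definable.comp S.mul_graph_mem ![j, k, i]

theorem definable_linear (p q : ℝ) :
    S.Definable fun x : Fin 3 → ℝ => x 2 = p * x 0 + q * x 1 := by
  have h : S.Definable fun x : Fin 3 → ℝ =>
      ∃ P, P = p ∧ ∃ Q, Q = q ∧ ∃ U, U = P * x 0 ∧ ∃ V, V = Q * x 1 ∧ x 2 = U + V :=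
    .exists <| (definable_eq_const _ _).and <| .exists <| (definable_eq_const _ _).and <|
      .exists <| (definable_eq_mul _ _ _).and <| .exists <| (definable_eq_mul _ _ _).and <|
        definable_eq_add _ _ _
  exact h.of_iff fun x => by simp

variable {D : Set ℝ}

theorem definable_graph_comp₂ {F : ℝ → ℝ → ℝ} {φ ψ : ℝ → ℝ}
    (hF : S.Definable fun x : Fin 3 → ℝ => x 2 = F (x 0) (x 1))
    (hφ : S.Definable fun x : Fin 2 → ℝ => x 0 ∈ D ∧ x 1 = φ (x 0))
    (hψ : S.Definable fun x : Fin 2 → ℝ => x 0 ∈ D ∧ x 1 = ψ (x 0)) :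
    S.Definable fun x : Fin 2 → ℝ => x 0 ∈ D ∧ x 1 = F (φ (x 0)) (ψ (x 0)) := by
  have h : S.Definable fun x : Fin 2 → ℝ =>
      ∃ u, (x 0 ∈ D ∧ u = φ (x 0)) ∧ ∃ v, (x 0 ∈ D ∧ v = ψ (x 0)) ∧ x 1 = F u v :=
    .exists <| (hφ.comp ![_, _]).and <| .exists <| (hψ.comp ![_, _]).and <| hF.comp ![_, _, _]
  refine h.of_iff fun x => ?_
  constructor
  · rintro ⟨_, ⟨hx, rfl⟩, _, ⟨-, rfl⟩, h⟩
    exact ⟨hx, h⟩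
  · rintro ⟨hx, h⟩
    exact ⟨_, ⟨hx, rfl⟩, _, ⟨hx, rfl⟩, h⟩

theorem definable_rightLocalMin {g : ℝ → ℝ} (hD : IsOpen D)
    (hg : S.Definable fun x : Fin 2 → ℝ => x 0 ∈ D ∧ x 1 = g (x 0)) :
    S.Definable fun x : Fin 1 → ℝ => x 0 ∈ D ∧ ∀ᶠ s in 𝓝[>] x 0, g (x 0) ≤ g s := by
  have h : S.Definable fun x : Fin 1 → ℝ => (∃ v, x 0 ∈ D ∧ v = g (x 0)) ∧
      ∃ m, x 0 < m ∧ ∀ s, x 0 < s → s < m →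
        ∀ u, (s ∈ D ∧ u = g s) → ∀ v, (x 0 ∈ D ∧ v = g (x 0)) → ¬ u < v :=
    (RealStructure.Definable.exists (hg.comp ![_, _])).and <| .exists <|
      (definable_lt _ _).and <| .forall <| ((definable_lt _ _).imp <| (definable_lt _ _).imp <|
        .forall <| (hg.comp ![_, _]).imp <| .forall <| (hg.comp ![_, _]).imp <|
          (definable_lt _ _).not)
  refine h.of_iff fun x => ⟨?_, ?_⟩
  · rintro ⟨⟨_, hx, rfl⟩, m, hm, H⟩
    refine ⟨hx, ?_⟩
    filter_upwards [Ioo_mem_nhdsGT hm, nhdsWithin_le_nhds (hD.mem_nhds hx)] with s hs hsD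
    exact not_lt.1 (H s hs.1 hs.2 _ ⟨hsD, rfl⟩ _ ⟨hx, rfl⟩)
  · rintro ⟨hx, hev⟩
    obtain ⟨m, hm, hsub⟩ := mem_nhdsGT_iff_exists_Ioo_subset.1 hev
    refine ⟨⟨_, hx, rfl⟩, m, hm, fun s hs hsm u hu v hv => ?_⟩
    rw [hu.2, hv.2, not_lt]
    exact hsub ⟨hs, hsm⟩

theorem eventually_nonpos_of_frequently_lt (S : OminimalStructure)
    {g g' : ℝ → ℝ} {a b L : ℝ} (hab : a < b)
    (hg : S.Definable fun x : Fin 2 → ℝ => x 0 ∈ Ioo a b ∧ x 1 = g (x 0))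
    (hderiv : ∀ t ∈ Ioo a b, HasDerivAt g (g' t) t)
    (hlim : Tendsto g (𝓝[>] a) (𝓝 L)) (hlt : ∃ᶠ t in 𝓝[>] a, g t < L) :
    ∀ᶠ t in 𝓝[>] a, g' t ≤ 0 := by
  have hIoo : ∀ᶠ t in 𝓝[>] a, t ∈ Ioo a b := Ioo_mem_nhdsGT hab
  rcases eventually_or_eventually_not
      (P := fun t => t ∈ Ioo a b ∧ ∀ᶠ s in 𝓝[>] t, g t ≤ g s)
      (definable_rightLocalMin isOpen_Ioo hg) a with hmin | hmin
  · exfalso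
    obtain ⟨u, hau, hmono⟩ := exists_monotoneOn_Ioo_of_eventually_nonneg (g' := g') <| by
      filter_upwards [hmin] with t ⟨ht, hle⟩
      exact ⟨hderiv t ht, (hderiv t ht).hasDerivWithinAt.nonneg_of_eventually_le hle⟩
    obtain ⟨t, hgt, ht⟩ := (hlt.and_eventually (Ioo_mem_nhdsGT hau)).exists
    exact (hmono.le_of_tendsto_nhdsGT hlim ht).not_gt hgt
  · filter_upwards [hmin, hIoo] with t hnot ht
    refine (hderiv t ht).hasDerivWithinAt.nonpos_of_frequently_lt ?_
    simpa only [not_and, ht, true_implies, not_eventually, not_le] using hnot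

end OminimalStructure

/-- Reverse l'Hôpital's rule for definable functions: if φ, ψ are definable and
differentiable on (0, ε), tend to 0 at 0⁺, ψ' > 0 near 0⁺, and φ/ψ → ℓ at 0⁺,
then φ'/ψ' → ℓ at 0⁺. -/
theorem reverse_lhopital (R : OminimalStructure) (ε : ℝ) (hε : 0 < ε) (φ ψ : ℝ → ℝ)
    (hφdef : {x : Fin 2 → ℝ | x 0 ∈ Set.Ioo 0 ε ∧ x 1 = φ (x 0)} ∈ R.sets 2)
    (hψdef : {x : Fin 2 → ℝ | x 0 ∈ Set.Ioo 0 ε ∧ x 1 = ψ (x 0)} ∈ R.sets 2)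
    (hφdiff : ∀ t ∈ Set.Ioo 0 ε, DifferentiableAt ℝ φ t)
    (hψdiff : ∀ t ∈ Set.Ioo 0 ε, DifferentiableAt ℝ ψ t)
    (hφ0 : Filter.Tendsto φ (nhdsWithin 0 (Set.Ioi 0)) (nhds 0))
    (hψ0 : Filter.Tendsto ψ (nhdsWithin 0 (Set.Ioi 0)) (nhds 0))
    (hψ' : ∀ᶠ t in nhdsWithin 0 (Set.Ioi 0), 0 < deriv ψ t)
    (ℓ : ℝ)
    (hlim : Filter.Tendsto (fun t => φ t / ψ t) (nhdsWithin 0 (Set.Ioi 0)) (nhds ℓ)) :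
    Filter.Tendsto (fun t => deriv φ t / deriv ψ t) (nhdsWithin 0 (Set.Ioi 0)) (nhds ℓ) := by
  have hIoo : ∀ᶠ t in 𝓝[>] 0, t ∈ Ioo 0 ε := Ioo_mem_nhdsGT hε
  have hψpos : ∀ᶠ t in 𝓝[>] 0, 0 < ψ t := by
    obtain ⟨u, hu, hmono⟩ := exists_strictMonoOn_Ioo_of_eventually_pos <| by
      filter_upwards [hIoo, hψ'] with t ht h using ⟨(hψdiff t ht).hasDerivAt, h⟩
    filter_upwards [Ioo_mem_nhdsGT hu] with t ht using hmono.lt_of_tendsto_nhdsGT hψ0 ht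
  have hsign (p q : ℝ) (h : ∀ᶠ t in 𝓝[>] 0, p * φ t + q * ψ t < 0) :
      ∀ᶠ t in 𝓝[>] 0, p * deriv φ t + q * deriv ψ t ≤ 0 :=
    R.eventually_nonpos_of_frequently_lt (g := fun t => p * φ t + q * ψ t) hε
      (OminimalStructure.definable_graph_comp₂ (F := fun u v => p * u + q * v)
        (R.definable_linear p q) hφdef hψdef)
      (fun t ht =>
        ((hφdiff t ht).hasDerivAt.const_mul p).add ((hψdiff t ht).hasDerivAt.const_mul q))
      (by simpa using (hφ0.const_mul p).add (hψ0.const_mul q)) h.frequently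
  refine tendsto_order.2 ⟨fun c hc => ?_, fun c hc => ?_⟩
  · obtain ⟨c', hcc', hc'ℓ⟩ := exists_between hc
    have hderiv := hsign (-1) c' <| by
      filter_upwards [hψpos, hlim.eventually_const_lt hc'ℓ] with t hψt ht
      linarith [(lt_div_iff₀ hψt).1 ht]
    filter_upwards [hderiv, hψ'] with t ht hψt
    exact hcc'.trans_le ((le_div_iff₀ hψt).2 (by linarith))
  · obtain ⟨c', hℓc', hc'c⟩ := exists_between hc
    have hderiv := hsign 1 (-c') <| by
      filter_upwards [hψpos, hlim.eventually_lt_const hℓc'] with t hψt ht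
      linarith [(div_lt_iff₀ hψt).1 ht]
    filter_upwards [hderiv, hψ'] with t ht hψt
    exact ((div_le_iff₀ hψt).2 (by linarith)).trans_lt hc'c
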